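/- arXiv:1910.13710 — 2 statements merged into one kernel-verified Lean document; each statement's English description precedes it below -/
import Mathlib

section
/- Let $\lambda$ be a partition of $n$ and let $k, \ell$ be nonnegative integers. The number of $(k,\ell)$-semistandard tableaux of shape $\lambda$ (fillings with letters $x_1 < \cdots < x_k < y_1 < \cdots < y_\ell$ such that the $x$-entries form a tableau with rows weakly increasing and columns strictly increasing, and the $y$-entries form a skew tableau with columns weakly increasing and rows strictly increasing) is nonzero if and only if $\lambda$ is a $(k,\ell)$-hook partition, i.e., $\lambda_{k+1} \leq \ell$. -/
/-- A `(k,ℓ)`-semistandard (super) tableau of shape `lam` (rows indexed from 0,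
cells `(a,b)` with `b < lam a`), with entries in the ordered alphabet
`1 < ⋯ < k < k+1 < ⋯ < k+ℓ` where values `≤ k` are even and values `> k` are
odd:  rows weakly increase with repeats allowed only for even letters (so odd
letters strictly increase along rows), and columns weakly increase with repeats
allowed only for odd letters (so even letters strictly increase down columns).
This is the Berele–Regev notion: the even entries form a row-semistandard
tableau and the odd entries form a column-semistandard skew tableau. -/
def SuperSSYT (k ℓ : ℕ) (lam : ℕ → ℕ) (T : ℕ → ℕ → ℕ) : Prop :=
  (∀ a b, b < lam a → 1 ≤ T a b ∧ T a b ≤ k + ℓ) ∧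
  (∀ a b, b + 1 < lam a → T a b ≤ T a (b + 1) ∧ (T a b = T a (b + 1) → T a b ≤ k)) ∧
  (∀ a b, b < lam (a + 1) → T a b ≤ T (a + 1) b ∧ (T a b = T (a + 1) b → k < T a b))

/-- There exists a `(k,ℓ)`-semistandard tableau of shape a partition `λ` of `n`
if and only if `λ` is a `(k,ℓ)`-hook partition, i.e. `λ_{k+1} ≤ ℓ`. -/
theorem stmt_5 (n k ℓ : ℕ) (lam : ℕ → ℕ)
    (hdec : ∀ i j, i ≤ j → lam j ≤ lam i) (hfin : ∀ i, n ≤ i → lam i = 0)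
    (hsum : ∑ i ∈ Finset.range n, lam i = n) :
    (∃ T : ℕ → ℕ → ℕ, SuperSSYT k ℓ lam T) ↔ lam k ≤ ℓ := by
  constructor
  · rintro ⟨T, hbd, hrow, hcol⟩
    by_contra h
    push_neg at h
    -- claim 1 : if T a b ≤ k then a + 1 ≤ T a b
    have claim1 : ∀ a b, b < lam a → T a b ≤ k → a + 1 ≤ T a b := by
      intro a
      induction a with
      | zero => intro b hb _; exact (hbd 0 b hb).1
      | succ a ih =>
        intro b hb hk
        have hb' : b < lam a := lt_of_lt_of_le hb (hdec a (a + 1) (Nat.le_succ a))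
        obtain ⟨hle, heq⟩ := hcol a b hb
        have hTa : T a b ≤ k := le_trans hle hk
        have hlt : T a b < T (a + 1) b := by
          rcases lt_or_eq_of_le hle with h' | h'
          · exact h'
          · exact absurd (lt_of_lt_of_le (heq h') hTa) (lt_irrefl _)
        have := ih b hb' hTa
        omega
    -- claim 2 : k + b + 1 ≤ T k b for b < lam k
    have claim2 : ∀ b, b < lam k → k + b + 1 ≤ T k b := by
      intro b
      induction b with
      | zero =>
        intro hb
        by_contra hlt
        push_neg at hlt
        have := claim1 k 0 hb (by omega)
        omega
      | succ b ih =>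
        intro hb
        have hb' : b + 1 < lam k := hb
        obtain ⟨hle, heq⟩ := hrow k b hb'
        have hbk : b < lam k := by omega
        have h1 := ih hbk
        have hlt : T k b < T k (b + 1) := by
          rcases lt_or_eq_of_le hle with h' | h'
          · exact h'
          · have := heq h'; omega
        omega
    have h1 := claim2 ℓ h
    have h2 := (hbd k ℓ h).2
    omega
  · intro h
    refine ⟨fun a b => if a < k then a + 1 else k + b + 1, ?_, ?_, ?_⟩
    · intro a b hb
      by_cases ha : a < k
      · simp only [ha, if_pos]
        omega
      · simp only [ha, if_neg, if_false]
        have : lam a ≤ lam k := hdec k a (by omega)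
        omega
    · intro a b hb
      by_cases ha : a < k <;> simp [ha] <;> omega
    · intro a b hb
      by_cases ha : a < k
      · by_cases ha' : a + 1 < k <;> simp [ha, ha'] <;> omega
      · have : ¬ a + 1 < k := by omega
        simp [ha, this]
end

section
/- For the RSK superinsertion: if $S_{j+1} = (S_{j-1} \leftarrow z_{i_j}) \leftarrow z_{i_{j+1}}$ where $S_{j-1}$ is $(k,\ell)$-semistandard and $z_{i_j} \geq z_{i_{j+1}}$ with $z_{i_{j+1}}$ an odd letter (in $\mathbf{y}$), then in the recording tableau the box of $j+1$ stands in relation $j \xrightarrow{\mathrm{NE}} j+1$ to the box of $j$ (north and/or east in the appropriate sense for the parities involved). -/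
/-! RSK superinsertion (Berele–Regev): even letters (values `≤ k`) are
column-inserted, odd letters (values `> k`) are row-inserted.  A tableau is a
list of rows.  Insertion returns the new tableau together with the coordinates
`(row, column)` (0-indexed) of the newly created box. -/

/-- The entries of column `c` of the tableau `T`, read top to bottom. -/
def colList (T : List (List ℕ)) (c : ℕ) : List ℕ :=
  T.filterMap (fun row => row[c]?)

/-- The entry in row `r`, column `c` (0 if absent). -/
def entryAt (T : List (List ℕ)) (r c : ℕ) : ℕ := (T.getD r []).getD c 0

/-- Replace the entry in row `r`, column `c` by `z`. -/
def setAt (T : List (List ℕ)) (r c z : ℕ) : List (List ℕ) :=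
  T.set r ((T.getD r []).set c z)

/-- Append `z` at the end of row `r` (creating a new bottom row if needed). -/
def addAt (T : List (List ℕ)) (r z : ℕ) : List (List ℕ) :=
  if r < T.length then T.set r ((T.getD r []) ++ [z]) else T ++ [[z]]

/-- Row insertion: insert `z` into the first row displacing the smallest entry
`≥ z`; a displaced entry is row-inserted into the next row; if every entry is
`< z`, add `z` at the right end of the row. -/
def rowInsert : List (List ℕ) → ℕ → List (List ℕ) × ℕ × ℕ
  | [], z => ([[z]], 0, 0)
  | row :: rest, z =>
    match row.findIdx? (fun w => decide (z ≤ w)) with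
    | none => ((row ++ [z]) :: rest, 0, row.length)
    | some i =>
      let w := row.getD i 0
      let res := rowInsert rest w
      ((row.set i z) :: res.1, res.2.1 + 1, res.2.2)

/-- Column insertion (with fuel): insert `z` into column `c` displacing the
smallest entry `≥ z`; if the displaced entry is even it is column-inserted into
the next column, if it is odd it is row-inserted (starting from the first row);
if every entry is `< z`, add `z` at the bottom of column `c`. -/
def colInsert (k : ℕ) : ℕ → List (List ℕ) → ℕ → ℕ → List (List ℕ) × ℕ × ℕ
  | 0, T, _, _ => (T, 0, 0)
  | fuel + 1, T, z, c =>
    match (colList T c).findIdx? (fun w => decide (z ≤ w)) with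
    | none => (addAt T (colList T c).length z, (colList T c).length, c)
    | some r =>
      let w := entryAt T r c
      let T' := setAt T r c z
      if w ≤ k then colInsert k fuel T' w (c + 1)
      else rowInsert T' w

/-- RSK superinsertion of a letter `z` into `T`: column insertion for even
letters (`z ≤ k`), row insertion for odd letters (`z > k`). -/
def superInsert (k : ℕ) (T : List (List ℕ)) (z : ℕ) : List (List ℕ) × ℕ × ℕ :=
  if z ≤ k then colInsert k ((T.headD []).length + 2) T z 0
  else rowInsert T z

/-- `(k,ℓ)`-semistandardness for a tableau given as a list of rows. -/
def IsSSSYT (k ℓ : ℕ) (T : List (List ℕ)) : Prop :=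
  (∀ row ∈ T, row ≠ []) ∧
  (∀ r, (T.getD (r + 1) []).length ≤ (T.getD r []).length) ∧
  (∀ r c, c < (T.getD r []).length → 1 ≤ entryAt T r c ∧ entryAt T r c ≤ k + ℓ) ∧
  (∀ r c, c + 1 < (T.getD r []).length →
      entryAt T r c ≤ entryAt T r (c + 1) ∧
      (entryAt T r c = entryAt T r (c + 1) → entryAt T r c ≤ k)) ∧
  (∀ r c, c < (T.getD (r + 1) []).length →
      entryAt T r c ≤ entryAt T (r + 1) c ∧
      (entryAt T r c = entryAt T (r + 1) c → k < entryAt T r c))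

/-!
Both letters are odd, so both insertions are row insertions, and this is the row bumping lemma.
Row by row, `z₂ ≤ z₁` forces the second insertion to bump at or left of the box where `z₁`
landed, so it displaces a letter no larger than the one `z₁` displaced and the comparison passes to
the next row. In the row where the first insertion stops, the second one still bumps (it meets
`z₁`), so its new box lies strictly lower, and weakly to the left because rows shorten downwards.
-/

theorem List.exists_findIdx?_eq_some_le {α : Type*} {p : α → Bool} {l : List α} {i : ℕ}
    (hi : i < l.length) (hp : p l[i]) : ∃ j ≤ i, l.findIdx? p = some j := by
  obtain ⟨j, hj⟩ := Option.isSome_iff_exists.mp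
    (List.findIdx?_isSome.trans (List.any_eq_true.mpr ⟨_, List.getElem_mem hi, hp⟩))
  obtain ⟨_, _, hmin⟩ := List.findIdx?_eq_some_iff_getElem.mp hj
  exact ⟨j, not_lt.mp fun hij => hmin i hij hp, hj⟩

theorem rowInsert_cons_of_findIdx?_eq_none {row : List ℕ} {rest : List (List ℕ)} {z : ℕ}
    (h : row.findIdx? (fun w => decide (z ≤ w)) = none) :
    rowInsert (row :: rest) z = ((row ++ [z]) :: rest, 0, row.length) := by
  simp only [rowInsert, h]

theorem rowInsert_cons_of_findIdx?_eq_some {row : List ℕ} {rest : List (List ℕ)} {z i : ℕ}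
    (h : row.findIdx? (fun w => decide (z ≤ w)) = some i) :
    rowInsert (row :: rest) z =
      ((row.set i z) :: (rowInsert rest (row.getD i 0)).1,
        (rowInsert rest (row.getD i 0)).2.1 + 1, (rowInsert rest (row.getD i 0)).2.2) := by
  simp only [rowInsert, h]

theorem superInsert_of_lt {k z : ℕ} (T : List (List ℕ)) (hz : k < z) :
    superInsert k T z = rowInsert T z := by
  simp [superInsert, not_le.mpr hz]

theorem rowInsert_col_le_length_head {T : List (List ℕ)}
    (hT : ∀ r, (T.getD (r + 1) []).length ≤ (T.getD r []).length) (z : ℕ) :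
    (rowInsert T z).2.2 ≤ (T.getD 0 []).length := by
  induction T generalizing z with
  | nil => simp [rowInsert]
  | cons row rest ih =>
    cases h : row.findIdx? (fun w => decide (z ≤ w)) with
    | none => simp [rowInsert_cons_of_findIdx?_eq_none h]
    | some i =>
      rw [rowInsert_cons_of_findIdx?_eq_some h]
      exact (ih (fun r => hT (r + 1)) _).trans (hT 0)

structure IsRowTableau (T : List (List ℕ)) : Prop where
  length_succ_le : ∀ r, (T.getD (r + 1) []).length ≤ (T.getD r []).length
  pairwise_le : ∀ row ∈ T, row.Pairwise (· ≤ ·)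

theorem IsRowTableau.tail {row : List ℕ} {rest : List (List ℕ)} (h : IsRowTableau (row :: rest)) :
    IsRowTableau rest :=
  ⟨fun r => h.length_succ_le (r + 1), fun r hr => h.pairwise_le r (List.mem_cons_of_mem _ hr)⟩

theorem IsSSSYT.isRowTableau {k ℓ : ℕ} {T : List (List ℕ)} (h : IsSSSYT k ℓ T) :
    IsRowTableau T := by
  refine ⟨h.2.1, fun row hrow => List.isChain_iff_pairwise.mp (List.isChain_iff_getElem.mpr ?_)⟩
  obtain ⟨r, hr, rfl⟩ := List.getElem_of_mem hrow
  intro c hc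
  have hrow : T.getD r [] = T[r] := List.getD_eq_getElem _ _ hr
  have := (h.2.2.2.1 r c (by rwa [hrow])).1
  simpa only [entryAt, hrow, List.getD_eq_getElem _ _ hc,
    List.getD_eq_getElem _ _ (Nat.lt_of_succ_lt hc)] using this

theorem rowInsert_rowInsert_of_le {T : List (List ℕ)} (hT : IsRowTableau T) {z₁ z₂ : ℕ}
    (h : z₂ ≤ z₁) :
    (rowInsert T z₁).2.1 < (rowInsert (rowInsert T z₁).1 z₂).2.1 ∧
      (rowInsert (rowInsert T z₁).1 z₂).2.2 ≤ (rowInsert T z₁).2.2 := by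
  induction T generalizing z₁ z₂ with
  | nil =>
    have h0 : [z₁].findIdx? (fun w => decide (z₂ ≤ w)) = some 0 := by simp [h]
    simp [rowInsert, h0]
  | cons row rest ih =>
    cases h₁ : row.findIdx? (fun w => decide (z₁ ≤ w)) with
    | none =>
      rw [rowInsert_cons_of_findIdx?_eq_none h₁]
      obtain ⟨i₂, -, h₂⟩ := (row ++ [z₁]).exists_findIdx?_eq_some_le
        (p := fun w => decide (z₂ ≤ w)) (i := row.length) (by simp) (by simpa using h)
      rw [rowInsert_cons_of_findIdx?_eq_some h₂]
      refine ⟨Nat.succ_pos _, ?_⟩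
      have hhead := hT.length_succ_le 0
      simp only [List.getD_cons_succ, List.getD_cons_zero] at hhead
      exact (rowInsert_col_le_length_head hT.tail.length_succ_le _).trans hhead
    | some i₁ =>
      obtain ⟨hi₁, hz₁, -⟩ := List.findIdx?_eq_some_iff_getElem.mp h₁
      rw [rowInsert_cons_of_findIdx?_eq_some h₁]
      have hi₁' : i₁ < (row.set i₁ z₁).length := by simpa using hi₁
      obtain ⟨i₂, hi₂, h₂⟩ := (row.set i₁ z₁).exists_findIdx?_eq_some_le
        (p := fun w => decide (z₂ ≤ w)) hi₁' (by simpa using h)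
      rw [rowInsert_cons_of_findIdx?_eq_some h₂]
      have hbump : (row.set i₁ z₁).getD i₂ 0 ≤ row.getD i₁ 0 := by
        rw [List.getD_eq_getElem _ _ (hi₂.trans_lt hi₁'), List.getD_eq_getElem _ _ hi₁]
        rcases hi₂.eq_or_lt with rfl | hlt
        · simpa using hz₁
        · rw [List.getElem_set_ne hlt.ne']
          exact List.pairwise_iff_getElem.mp (hT.pairwise_le row List.mem_cons_self) _ _ _ _ hlt
      obtain ⟨hrow, hcol⟩ := ih hT.tail hbump
      exact ⟨Nat.succ_lt_succ hrow, hcol⟩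

theorem stmt_11_general (k ℓ : ℕ) (S0 : List (List ℕ)) (hS : IsSSSYT k ℓ S0)
    (z1 z2 : ℕ) (hz2 : k < z2) (hge : z2 ≤ z1) :
    (superInsert k S0 z1).2.1 ≤ (superInsert k (superInsert k S0 z1).1 z2).2.1 ∧
    (superInsert k (superInsert k S0 z1).1 z2).2.2 ≤ (superInsert k S0 z1).2.2 ∧
    (superInsert k S0 z1).2 ≠ (superInsert k (superInsert k S0 z1).1 z2).2 := by
  rw [superInsert_of_lt S0 (hz2.trans_le hge), superInsert_of_lt _ hz2]
  obtain ⟨hrow, hcol⟩ := rowInsert_rowInsert_of_le hS.isRowTableau hge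
  exact ⟨hrow.le, hcol, fun h => hrow.ne (congrArg Prod.fst h)⟩

/-- Proposition 5.5(2) ($m=1$): if `z₁ ≥ z₂` and `z₂` is an odd letter, then
after the two successive superinsertions the relation `j →NE j+1` holds in the
recording tableau; for two odd entries this means geometrically that the new
box of the second insertion is south and/or west of the new box of the first
one. -/
theorem stmt_11 (k ℓ : ℕ) (S0 : List (List ℕ)) (hS : IsSSSYT k ℓ S0)
    (z1 z2 : ℕ) (hz1 : 1 ≤ z1) (hz1' : z1 ≤ k + ℓ)
    (hz2 : k < z2) (hz2' : z2 ≤ k + ℓ) (hge : z2 ≤ z1) :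
    (superInsert k S0 z1).2.1 ≤ (superInsert k (superInsert k S0 z1).1 z2).2.1 ∧
    (superInsert k (superInsert k S0 z1).1 z2).2.2 ≤ (superInsert k S0 z1).2.2 ∧
    (superInsert k S0 z1).2 ≠ (superInsert k (superInsert k S0 z1).1 z2).2 :=
  stmt_11_general k ℓ S0 hS z1 z2 hz2 hge
end
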